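/- arXiv:2110.14000 — 6 statements merged into one kernel-verified Lean document; each statement's English description precedes it below -/
import Mathlib

section
/- In the finite MDP setting, let μ be a fully supported probability distribution on S×A and φ : S×A → I any partition function. Then the projected Bellman optimality operator T_G is a γ-contraction in the sup-norm: for all Q₁, Q₂ : S×A → ℝ, ∥T_G Q₁ − T_G Q₂∥_∞ ≤ γ ∥Q₁ − Q₂∥_∞. -/
open Finset

/-- Cellwise `μ`-weighted average over the cells of `φ`. -/
noncomputable def cellAvg {S A I : Type*} [Fintype S] [Fintype A] [DecidableEq I]
    (μ : S × A → ℝ) (φ : S × A → I) (h : S × A → ℝ) (x : S × A) : ℝ :=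
  (∑ y : S × A, if φ y = φ x then μ y * h y else 0) /
  (∑ y : S × A, if φ y = φ x then μ y else 0)

/-- The Bellman optimality operator. -/
noncomputable def TOpt {S A : Type*} [Fintype S] [Fintype A] [Nonempty A]
    (R : S × A → ℝ) (P : S × A → S → ℝ) (γ : ℝ) (Q : S × A → ℝ) (x : S × A) : ℝ :=
  R x + γ * ∑ s' : S, P x s' * (univ.sup' univ_nonempty fun a' => Q (s', a'))

/-- The sup-norm over the finite state-action space. -/
noncomputable def supNorm {S A : Type*} [Fintype S] [Fintype A] [Nonempty S] [Nonempty A]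
    (f : S × A → ℝ) : ℝ :=
  univ.sup' univ_nonempty fun x : S × A => |f x|

/-- the projected Bellman optimality operator `T_G` (cellwise μ-average of the
Bellman backup over the cells of φ) is a γ-contraction in sup-norm. -/
theorem stmt_1 {S A I : Type*} [Fintype S] [Fintype A] [Nonempty S] [Nonempty A]
    [DecidableEq I]
    (Rmax : ℝ) (R : S × A → ℝ) (hR : ∀ x, 0 ≤ R x ∧ R x ≤ Rmax)
    (P : S × A → S → ℝ) (hP0 : ∀ x s', 0 ≤ P x s') (hP1 : ∀ x, ∑ s' : S, P x s' = 1)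
    (γ : ℝ) (hγ0 : 0 ≤ γ) (hγ1 : γ < 1)
    (μ : S × A → ℝ) (hμpos : ∀ x, 0 < μ x) (hμsum : ∑ x : S × A, μ x = 1)
    (φ : S × A → I) (Q₁ Q₂ : S × A → ℝ) :
    supNorm (fun x => cellAvg μ φ (TOpt R P γ Q₁) x - cellAvg μ φ (TOpt R P γ Q₂) x) ≤
      γ * supNorm (fun x => Q₁ x - Q₂ x) := by
  set K := supNorm (fun x => Q₁ x - Q₂ x) with hKdef
  have hQK : ∀ x : S × A, |Q₁ x - Q₂ x| ≤ K := by
    intro x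
    exact Finset.le_sup' (fun x : S × A => |Q₁ x - Q₂ x|) (mem_univ x)
  -- pointwise contraction of TOpt
  have hT : ∀ x : S × A, |TOpt R P γ Q₁ x - TOpt R P γ Q₂ x| ≤ γ * K := by
    intro x
    have hM : ∀ s' : S, |(univ.sup' univ_nonempty fun a' => Q₁ (s', a')) -
        (univ.sup' univ_nonempty fun a' => Q₂ (s', a'))| ≤ K := by
      intro s'
      rw [abs_sub_le_iff]
      constructor
      · rw [sub_le_iff_le_add]
        apply Finset.sup'_le
        intro a _
        have h1 : Q₁ (s', a) ≤ Q₂ (s', a) + K := by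
          have := hQK (s', a)
          have := abs_le.mp this
          linarith [this.2]
        have h2 := Finset.le_sup' (fun a' => Q₂ (s', a')) (mem_univ a)
        linarith
      · rw [sub_le_iff_le_add]
        apply Finset.sup'_le
        intro a _
        have h1 : Q₂ (s', a) ≤ Q₁ (s', a) + K := by
          have := abs_le.mp (hQK (s', a))
          linarith [this.1]
        have h2 := Finset.le_sup' (fun a' => Q₁ (s', a')) (mem_univ a)
        linarith
    have hrw : TOpt R P γ Q₁ x - TOpt R P γ Q₂ x =
        γ * ∑ s' : S, P x s' * ((univ.sup' univ_nonempty fun a' => Q₁ (s', a')) -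
          (univ.sup' univ_nonempty fun a' => Q₂ (s', a'))) := by
      simp only [TOpt]
      rw [Finset.sum_congr rfl (fun s' _ => mul_sub (P x s') _ _), Finset.sum_sub_distrib]
      ring
    rw [hrw, abs_mul, abs_of_nonneg hγ0]
    apply mul_le_mul_of_nonneg_left _ hγ0
    calc |∑ s' : S, P x s' * _| ≤ ∑ s' : S, |P x s' * ((univ.sup' univ_nonempty fun a' => Q₁ (s', a')) -
          (univ.sup' univ_nonempty fun a' => Q₂ (s', a')))| := Finset.abs_sum_le_sum_abs _ _
      _ ≤ ∑ s' : S, P x s' * K := by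
          apply Finset.sum_le_sum
          intro s' _
          rw [abs_mul, abs_of_nonneg (hP0 x s')]
          exact mul_le_mul_of_nonneg_left (hM s') (hP0 x s')
      _ = K := by rw [← Finset.sum_mul, hP1, one_mul]
  -- cellAvg averaging bound
  have hγK : 0 ≤ γ * K := by
    have : (0:ℝ) ≤ K := le_trans (abs_nonneg _) (hQK (Classical.arbitrary _))
    positivity
  apply Finset.sup'_le
  intro x _
  have hD : 0 < ∑ y : S × A, if φ y = φ x then μ y else 0 := by
    apply Finset.sum_pos'
    · intro y _
      split <;> [exact (hμpos y).le; rfl]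
    · exact ⟨x, mem_univ x, by simp [hμpos x]⟩
  have hrw : cellAvg μ φ (TOpt R P γ Q₁) x - cellAvg μ φ (TOpt R P γ Q₂) x =
      (∑ y : S × A, if φ y = φ x then μ y * (TOpt R P γ Q₁ y - TOpt R P γ Q₂ y) else 0) /
      (∑ y : S × A, if φ y = φ x then μ y else 0) := by
    simp only [cellAvg]
    rw [div_sub_div_same, ← Finset.sum_sub_distrib]
    congr 1
    apply Finset.sum_congr rfl
    intro y _
    split <;> ring
  show |cellAvg μ φ (TOpt R P γ Q₁) x - cellAvg μ φ (TOpt R P γ Q₂) x| ≤ γ * K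
  rw [hrw, abs_div, abs_of_pos hD, div_le_iff₀ hD]
  calc |∑ y : S × A, if φ y = φ x then μ y * (TOpt R P γ Q₁ y - TOpt R P γ Q₂ y) else 0|
      ≤ ∑ y : S × A, |if φ y = φ x then μ y * (TOpt R P γ Q₁ y - TOpt R P γ Q₂ y) else 0| :=
        Finset.abs_sum_le_sum_abs _ _
    _ ≤ ∑ y : S × A, if φ y = φ x then μ y * (γ * K) else 0 := by
        apply Finset.sum_le_sum
        intro y _
        split
        · rw [abs_mul, abs_of_nonneg (hμpos y).le]
          exact mul_le_mul_of_nonneg_left (hT y) (hμpos y).le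
        · simp
    _ = γ * K * ∑ y : S × A, if φ y = φ x then μ y else 0 := by
        rw [Finset.mul_sum]
        apply Finset.sum_congr rfl
        intro y _
        split <;> ring
end

section
/- In the finite MDP setting, let μ be a fully supported probability distribution on S×A, let φ : S×A → I be a partition function, and suppose Q* (the unique fixed point of the Bellman optimality operator T) is φ-measurable. Then Q* is a fixed point of the projected Bellman operator T_G, it is the unique such fixed point, and consequently for every Q : S×A → ℝ: Q = Q* if and only if ∥Q − T_G Q∥_{2,μ} = 0. -/
open Finset

/-- The `μ`-weighted `L₂` norm. -/
noncomputable def l2mu {S A : Type*} [Fintype S] [Fintype A]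
    (μ : S × A → ℝ) (f : S × A → ℝ) : ℝ :=
  Real.sqrt (∑ x : S × A, μ x * f x ^ 2)


lemma denom_pos' {S A I : Type*} [Fintype S] [Fintype A] [DecidableEq I]
    (μ : S × A → ℝ) (hμpos : ∀ x, 0 < μ x) (φ : S × A → I) (x : S × A) :
    0 < ∑ y : S × A, if φ y = φ x then μ y else 0 := by
  apply Finset.sum_pos'
  · intro i _; split <;> [exact (hμpos i).le; exact le_rfl]
  · exact ⟨x, mem_univ x, by simp [hμpos x]⟩

lemma cellAvg_meas {S A I : Type*} [Fintype S] [Fintype A] [DecidableEq I]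
    (μ : S × A → ℝ) (hμpos : ∀ x, 0 < μ x) (φ : S × A → I) (g : S × A → ℝ)
    (x : S × A) (hg : ∀ y, φ y = φ x → g y = g x) :
    cellAvg μ φ g x = g x := by
  unfold cellAvg
  have hnum : (∑ y : S × A, if φ y = φ x then μ y * g y else 0)
      = (∑ y : S × A, if φ y = φ x then μ y else 0) * g x := by
    rw [Finset.sum_mul]
    refine Finset.sum_congr rfl fun y _ => ?_
    split
    · rename_i h; rw [hg y h]
    · simp
  rw [hnum, mul_comm, mul_div_assoc, div_self (denom_pos' μ hμpos φ x).ne', mul_one]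


lemma cellAvg_abs_le {S A I : Type*} [Fintype S] [Fintype A] [DecidableEq I]
    (μ : S × A → ℝ) (hμpos : ∀ x, 0 < μ x) (φ : S × A → I) (g : S × A → ℝ)
    (x : S × A) (M : ℝ) (hg : ∀ y, |g y| ≤ M) :
    |cellAvg μ φ g x| ≤ M := by
  unfold cellAvg
  have hD := denom_pos' μ hμpos φ x
  rw [abs_div, abs_of_pos hD, div_le_iff₀ hD]
  calc |∑ y : S × A, if φ y = φ x then μ y * g y else 0|
      ≤ ∑ y : S × A, |if φ y = φ x then μ y * g y else 0| := Finset.abs_sum_le_sum_abs _ _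
    _ ≤ ∑ y : S × A, (if φ y = φ x then μ y else 0) * M := by
        refine Finset.sum_le_sum fun y _ => ?_
        split
        · rw [abs_mul, abs_of_pos (hμpos y)]
          exact mul_le_mul_of_nonneg_left (hg y) (hμpos y).le
        · simp
    _ = M * ∑ y : S × A, (if φ y = φ x then μ y else 0) := by rw [← Finset.sum_mul, mul_comm]

lemma cellAvg_sub {S A I : Type*} [Fintype S] [Fintype A] [DecidableEq I]
    (μ : S × A → ℝ) (φ : S × A → I) (g h : S × A → ℝ) (x : S × A) :
    cellAvg μ φ g x - cellAvg μ φ h x = cellAvg μ φ (fun y => g y - h y) x := by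
  unfold cellAvg
  rw [div_sub_div_same, ← Finset.sum_sub_distrib]
  congr 1
  refine Finset.sum_congr rfl fun y _ => ?_
  split <;> ring

lemma sup'_abs_sub_le {α : Type*} [Fintype α] [Nonempty α] (f g : α → ℝ) (M : ℝ)
    (h : ∀ a, |f a - g a| ≤ M) :
    |(univ.sup' univ_nonempty f) - (univ.sup' univ_nonempty g)| ≤ M := by
  rw [abs_sub_le_iff]
  constructor <;>
  · rw [sub_le_iff_le_add]
    apply Finset.sup'_le
    intro a _
    have := abs_le.1 (h a)
    first
      | linarith [Finset.le_sup' g (Finset.mem_univ a)]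
      | linarith [Finset.le_sup' f (Finset.mem_univ a)]

lemma TOpt_contract {S A : Type*} [Fintype S] [Fintype A] [Nonempty A]
    (R : S × A → ℝ) (P : S × A → S → ℝ) (hP0 : ∀ x s', 0 ≤ P x s')
    (hP1 : ∀ x, ∑ s' : S, P x s' = 1) (γ : ℝ) (hγ0 : 0 ≤ γ)
    (Q Q' : S × A → ℝ) (M : ℝ) (hM : ∀ y, |Q y - Q' y| ≤ M) (x : S × A) :
    |TOpt R P γ Q x - TOpt R P γ Q' x| ≤ γ * M := by
  unfold TOpt
  have : R x + γ * (∑ s' : S, P x s' * (univ.sup' univ_nonempty fun a' => Q (s', a')))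
      - (R x + γ * ∑ s' : S, P x s' * (univ.sup' univ_nonempty fun a' => Q' (s', a')))
      = γ * ∑ s' : S, P x s' *
        ((univ.sup' univ_nonempty fun a' => Q (s', a')) -
         (univ.sup' univ_nonempty fun a' => Q' (s', a'))) := by
    simp only [Finset.mul_sum]
    rw [add_sub_add_left_eq_sub, ← Finset.sum_sub_distrib]
    refine Finset.sum_congr rfl fun s' _ => ?_; ring
  rw [this, abs_mul, abs_of_nonneg hγ0]
  apply mul_le_mul_of_nonneg_left _ hγ0
  calc |∑ s' : S, P x s' * _| ≤ ∑ s' : S, |P x s' *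
        ((univ.sup' univ_nonempty fun a' => Q (s', a')) -
         (univ.sup' univ_nonempty fun a' => Q' (s', a')))| := Finset.abs_sum_le_sum_abs _ _
    _ ≤ ∑ s' : S, P x s' * M := by
        refine Finset.sum_le_sum fun s' _ => ?_
        rw [abs_mul, abs_of_nonneg (hP0 x s')]
        exact mul_le_mul_of_nonneg_left
          (sup'_abs_sub_le _ _ M (fun a => hM (s', a))) (hP0 x s')
    _ = M := by rw [← Finset.sum_mul, hP1 x, one_mul]

/-- if `Q⋆` (the fixed point of the Bellman optimality operator) is
`φ`-measurable, then `Q⋆` is a fixed point of the projected operator `T_G`, it is the unique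
such fixed point, and `Q = Q⋆ ↔ ‖Q − T_G Q‖₂,μ = 0`. -/
theorem stmt_2 {S A I : Type*} [Fintype S] [Fintype A] [Nonempty S] [Nonempty A]
    [DecidableEq I]
    (Rmax : ℝ) (R : S × A → ℝ) (hR : ∀ x, 0 ≤ R x ∧ R x ≤ Rmax)
    (P : S × A → S → ℝ) (hP0 : ∀ x s', 0 ≤ P x s') (hP1 : ∀ x, ∑ s' : S, P x s' = 1)
    (γ : ℝ) (hγ0 : 0 ≤ γ) (hγ1 : γ < 1)
    (μ : S × A → ℝ) (hμpos : ∀ x, 0 < μ x) (hμsum : ∑ x : S × A, μ x = 1)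
    (φ : S × A → I)
    (Qstar : S × A → ℝ) (hQstar : TOpt R P γ Qstar = Qstar)
    (hmeas : ∀ x y, φ x = φ y → Qstar x = Qstar y) :
    cellAvg μ φ (TOpt R P γ Qstar) = Qstar ∧
    (∀ Q : S × A → ℝ, cellAvg μ φ (TOpt R P γ Q) = Q → Q = Qstar) ∧
    (∀ Q : S × A → ℝ,
      Q = Qstar ↔ l2mu μ (fun x => Q x - cellAvg μ φ (TOpt R P γ Q) x) = 0) := by
  have hfix : cellAvg μ φ (TOpt R P γ Qstar) = Qstar := by
    funext x
    rw [hQstar]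
    exact cellAvg_meas μ hμpos φ Qstar x (fun y h => hmeas y x h)
  have huniq : ∀ Q : S × A → ℝ, cellAvg μ φ (TOpt R P γ Q) = Q → Q = Qstar := by
    intro Q hQ
    have hne : (univ : Finset (S × A)).Nonempty := univ_nonempty
    set d := univ.sup' hne (fun y => |Q y - Qstar y|) with hd
    have hdmem : ∀ y, |Q y - Qstar y| ≤ d := fun y => Finset.le_sup' (fun z => |Q z - Qstar z|) (mem_univ y)
    have hbound : ∀ x, |Q x - Qstar x| ≤ γ * d := by
      intro x
      have heq : Q x - Qstar x
          = cellAvg μ φ (fun y => TOpt R P γ Q y - TOpt R P γ Qstar y) x := by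
        conv_lhs => rw [← hQ, ← hfix]
        exact cellAvg_sub μ φ _ _ x
      rw [heq]
      exact cellAvg_abs_le μ hμpos φ _ x (γ * d)
        (fun y => TOpt_contract R P hP0 hP1 γ hγ0 Q Qstar d hdmem y)
    have hdle : d ≤ γ * d := Finset.sup'_le hne _ (fun y _ => hbound y)
    have hd0 : 0 ≤ d := le_trans (abs_nonneg _) (hdmem (Classical.arbitrary _))
    have hdz : d ≤ 0 := by nlinarith
    funext x
    have h1 : |Q x - Qstar x| ≤ 0 := le_trans (hdmem x) hdz
    have h2 : Q x - Qstar x = 0 := abs_eq_zero.mp (le_antisymm h1 (abs_nonneg _))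
    linarith
  refine ⟨hfix, huniq, fun Q => ⟨?_, ?_⟩⟩
  · rintro rfl
    simp only [hfix, sub_self, l2mu]
    simp
  · intro h
    apply huniq
    funext x
    have hnn : ∀ y ∈ (univ : Finset (S × A)),
        0 ≤ μ y * (Q y - cellAvg μ φ (TOpt R P γ Q) y) ^ 2 :=
      fun y _ => mul_nonneg (hμpos y).le (sq_nonneg _)
    have hsum : ∑ y : S × A, μ y * (Q y - cellAvg μ φ (TOpt R P γ Q) y) ^ 2 = 0 := by
      have := Real.sqrt_eq_zero (Finset.sum_nonneg hnn) |>.mp h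
      exact this
    have hterm := (Finset.sum_eq_zero_iff_of_nonneg hnn).mp hsum x (mem_univ x)
    have hsq : (Q x - cellAvg μ φ (TOpt R P γ Q) x) ^ 2 = 0 := by
      rcases mul_eq_zero.mp hterm with h' | h'
      · exact absurd h' (hμpos x).ne'
      · exact h'
    have := pow_eq_zero_iff (n := 2) (by norm_num) |>.mp hsq
    linarith
end

section
/- (BVFT identification.) In the finite MDP setting, let μ be a fully supported probability distribution on S×A, let Q₁, …, Q_m : S×A → ℝ be candidate functions, and for each pair (i,j) let φ_{i,j}(s,a) = (Q_i(s,a), Q_j(s,a)) and let T_{G_{i,j}} be the projected Bellman operator induced by φ_{i,j} and μ. Suppose Q* ∈ {Q₁, …, Q_m}, i.e., Q_{i*} = Q* for some index i*. Then for every i: Q_i = Q* if and only if the BVFT loss max_{j=1,…,m} ∥Q_i − T_{G_{i,j}} Q_i∥_{2,μ} equals 0. -/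
open Finset

/-!
If `Q i = Q⋆`, then `T (Q i) = Q i` is constant on the cells of `φ_{i,j}`, so the
cell average leaves it unchanged and every term of the loss vanishes. Conversely, a vanishing loss
gives `Q i = T_{G_{i,i⋆}} (Q i)`; since `Q⋆` is constant on the cells of `φ_{i,i⋆}`, also
`Q⋆ = T_{G_{i,i⋆}} Q⋆`. Cell averaging is linear and non-expansive in the sup norm and `T` is a
`γ`-contraction, so `‖Q i - Q⋆‖∞ ≤ γ ‖Q i - Q⋆‖∞`, which forces `Q i = Q⋆`.
-/

namespace Finset

lemma sup'_le_sup'_add_norm_sub {B : Type*} [Fintype B] [Nonempty B] (f g : B → ℝ) :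
    univ.sup' univ_nonempty f ≤ univ.sup' univ_nonempty g + ‖f - g‖ :=
  sup'_le _ _ fun b _ => calc
    f b = g b + (f - g) b := by simp
    _ ≤ univ.sup' univ_nonempty g + ‖f - g‖ :=
      add_le_add (le_sup' g (mem_univ b)) ((le_abs_self _).trans (norm_le_pi_norm (f - g) b))

lemma abs_sup'_sub_sup'_le_norm_sub {B : Type*} [Fintype B] [Nonempty B] (f g : B → ℝ) :
    |univ.sup' univ_nonempty f - univ.sup' univ_nonempty g| ≤ ‖f - g‖ := by
  rw [abs_sub_le_iff, sub_le_iff_le_add', sub_le_iff_le_add']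
  exact ⟨sup'_le_sup'_add_norm_sub f g, norm_sub_rev g f ▸ sup'_le_sup'_add_norm_sub g f⟩

lemma sup'_eq_zero_iff_of_nonneg {B : Type*} {s : Finset B} (hs : s.Nonempty) {f : B → ℝ}
    (hf : ∀ b ∈ s, 0 ≤ f b) : s.sup' hs f = 0 ↔ ∀ b ∈ s, f b = 0 := by
  constructor
  · intro h b hb
    exact le_antisymm (h ▸ le_sup' f hb) (hf b hb)
  · intro h
    obtain ⟨b, hb⟩ := hs
    exact le_antisymm (sup'_le _ _ fun c hc => (h c hc).le) (h b hb ▸ le_sup' f hb)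

end Finset

section CellAverage

variable {S A I : Type*} [Fintype S] [Fintype A] [DecidableEq I]
  {μ : S × A → ℝ} (φ : S × A → I)

lemma cellAvg_sub_s3 (h₁ h₂ : S × A → ℝ) :
    cellAvg μ φ (h₁ - h₂) = cellAvg μ φ h₁ - cellAvg μ φ h₂ := by
  funext x
  simp only [cellAvg, Pi.sub_apply, div_sub_div_same, ← sum_sub_distrib]
  congr 1
  refine sum_congr rfl fun y _ => ?_
  split_ifs <;> ring

lemma cellAvg_eq_self (hμ : ∀ x, 0 < μ x) {h : S × A → ℝ}
    (hh : ∀ x y, φ x = φ y → h x = h y) : cellAvg μ φ h = h := by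
  funext x
  have hcell : 0 < ∑ y : S × A, if φ y = φ x then μ y else 0 :=
    sum_pos' (fun y _ => by split_ifs <;> simp [(hμ y).le]) ⟨x, mem_univ x, by simp [hμ x]⟩
  rw [cellAvg, div_eq_iff hcell.ne', mul_sum]
  refine sum_congr rfl fun y _ => ?_
  split_ifs with hy
  · rw [hh y x hy, mul_comm]
  · rw [mul_zero]

lemma norm_cellAvg_le (hμ : ∀ x, 0 ≤ μ x) (h : S × A → ℝ) :
    ‖cellAvg μ φ h‖ ≤ ‖h‖ := by
  refine (pi_norm_le_iff_of_nonneg (norm_nonneg h)).2 fun x => ?_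
  rw [Real.norm_eq_abs, cellAvg, abs_div]
  refine div_le_of_le_mul₀ (abs_nonneg _) (norm_nonneg h) ?_
  calc |∑ y : S × A, if φ y = φ x then μ y * h y else 0|
      ≤ ∑ y : S × A, |if φ y = φ x then μ y * h y else 0| := abs_sum_le_sum_abs _ _
    _ ≤ ∑ y : S × A, ‖h‖ * (if φ y = φ x then μ y else 0) := by
        refine sum_le_sum fun y _ => ?_
        split_ifs
        · rw [abs_mul, abs_of_nonneg (hμ y), mul_comm]
          exact mul_le_mul_of_nonneg_right (norm_le_pi_norm h y) (hμ y)
        · simp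
    _ = ‖h‖ * |∑ y : S × A, if φ y = φ x then μ y else 0| := by
        rw [← mul_sum, abs_of_nonneg (sum_nonneg fun y _ => by split_ifs <;> simp [hμ y])]

end CellAverage

lemma norm_TOpt_sub_le {S A : Type*} [Fintype S] [Fintype A] [Nonempty A]
    (R : S × A → ℝ) {P : S × A → S → ℝ} (hP0 : ∀ x s', 0 ≤ P x s')
    (hP1 : ∀ x, ∑ s' : S, P x s' = 1) {γ : ℝ} (hγ0 : 0 ≤ γ) (f g : S × A → ℝ) :
    ‖TOpt R P γ f - TOpt R P γ g‖ ≤ γ * ‖f - g‖ := by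
  refine (pi_norm_le_iff_of_nonneg (by positivity)).2 fun x => ?_
  have hmax : ∀ s', |(univ.sup' univ_nonempty fun a => f (s', a)) -
      univ.sup' univ_nonempty fun a => g (s', a)| ≤ ‖f - g‖ := fun s' =>
    (abs_sup'_sub_sup'_le_norm_sub _ _).trans <|
      (pi_norm_le_iff_of_nonneg (norm_nonneg _)).2 fun a => norm_le_pi_norm (f - g) (s', a)
  rw [Pi.sub_apply, Real.norm_eq_abs, TOpt, TOpt, add_sub_add_left_eq_sub, ← mul_sub,
    ← sum_sub_distrib, abs_mul, abs_of_nonneg hγ0]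
  refine mul_le_mul_of_nonneg_left ?_ hγ0
  calc |∑ s', (P x s' * (univ.sup' univ_nonempty fun a => f (s', a)) -
          P x s' * univ.sup' univ_nonempty fun a => g (s', a))|
      ≤ ∑ s', P x s' * ‖f - g‖ := by
        refine (abs_sum_le_sum_abs _ _).trans (sum_le_sum fun s' _ => ?_)
        rw [← mul_sub, abs_mul, abs_of_nonneg (hP0 x s')]
        exact mul_le_mul_of_nonneg_left (hmax s') (hP0 x s')
    _ = ‖f - g‖ := by rw [← sum_mul, hP1 x, one_mul]

lemma l2mu_eq_zero_iff {S A : Type*} [Fintype S] [Fintype A]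
    {μ : S × A → ℝ} (hμ : ∀ x, 0 < μ x) (f : S × A → ℝ) :
    l2mu μ f = 0 ↔ f = 0 := by
  have hnn : ∀ x ∈ (univ : Finset (S × A)), 0 ≤ μ x * f x ^ 2 :=
    fun x _ => mul_nonneg (hμ x).le (sq_nonneg _)
  rw [l2mu, Real.sqrt_eq_zero (sum_nonneg hnn), sum_eq_zero_iff_of_nonneg hnn, funext_iff]
  simp [(hμ _).ne']

lemma l2mu_nonneg {S A : Type*} [Fintype S] [Fintype A] (μ : S × A → ℝ) (f : S × A → ℝ) :
    0 ≤ l2mu μ f :=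
  Real.sqrt_nonneg _

lemma eq_of_eq_cellAvg_TOpt {S A I : Type*} [Fintype S] [Fintype A] [Nonempty A] [DecidableEq I]
    {R : S × A → ℝ} {P : S × A → S → ℝ} (hP0 : ∀ x s', 0 ≤ P x s')
    (hP1 : ∀ x, ∑ s' : S, P x s' = 1) {γ : ℝ} (hγ0 : 0 ≤ γ) (hγ1 : γ < 1)
    {μ : S × A → ℝ} (hμ : ∀ x, 0 < μ x) {φ : S × A → I} {Q Qstar : S × A → ℝ}
    (hQstar : TOpt R P γ Qstar = Qstar) (hcell : ∀ x y, φ x = φ y → Qstar x = Qstar y)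
    (hQ : Q = cellAvg μ φ (TOpt R P γ Q)) : Q = Qstar := by
  have hQstar' : Qstar = cellAvg μ φ (TOpt R P γ Qstar) := by
    rw [hQstar, cellAvg_eq_self φ hμ hcell]
  have hcontr : ‖Q - Qstar‖ ≤ γ * ‖Q - Qstar‖ := calc
    ‖Q - Qstar‖ = ‖cellAvg μ φ (TOpt R P γ Q - TOpt R P γ Qstar)‖ := by
      rw [cellAvg_sub_s3, ← hQ, ← hQstar']
    _ ≤ ‖TOpt R P γ Q - TOpt R P γ Qstar‖ := norm_cellAvg_le φ (fun x => (hμ x).le) _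
    _ ≤ γ * ‖Q - Qstar‖ := norm_TOpt_sub_le R hP0 hP1 hγ0 Q Qstar
  have hnorm : ‖Q - Qstar‖ = 0 := by nlinarith [norm_nonneg (Q - Qstar)]
  exact sub_eq_zero.1 (norm_eq_zero.1 hnorm)

theorem stmt_3_general {S A ι : Type*} [Fintype S] [Fintype A] [Nonempty A]
    [Fintype ι] [Nonempty ι]
    (R : S × A → ℝ)
    (P : S × A → S → ℝ) (hP0 : ∀ x s', 0 ≤ P x s') (hP1 : ∀ x, ∑ s' : S, P x s' = 1)
    (γ : ℝ) (hγ0 : 0 ≤ γ) (hγ1 : γ < 1)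
    (μ : S × A → ℝ) (hμpos : ∀ x, 0 < μ x)
    (Q : ι → S × A → ℝ)
    (Qstar : S × A → ℝ) (hQstar : TOpt R P γ Qstar = Qstar)
    (hmem : ∃ istar, Q istar = Qstar) :
    ∀ i, Q i = Qstar ↔
      (univ.sup' univ_nonempty fun j : ι =>
        l2mu μ (fun x => Q i x -
          cellAvg μ (fun y : S × A => (Q i y, Q j y)) (TOpt R P γ (Q i)) x)) = 0 := by
  obtain ⟨istar, hstar⟩ := hmem
  intro i
  rw [sup'_eq_zero_iff_of_nonneg _ fun j _ => l2mu_nonneg _ _]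
  simp only [mem_univ, forall_const, l2mu_eq_zero_iff hμpos]
  constructor
  · rintro rfl j
    funext x
    rw [Pi.zero_apply, sub_eq_zero, hQstar,
      cellAvg_eq_self _ hμpos (h := Q i) fun x y hxy => congrArg Prod.fst hxy]
  · intro hloss
    refine eq_of_eq_cellAvg_TOpt (φ := fun y => (Q i y, Q istar y)) hP0 hP1 hγ0 hγ1 hμpos hQstar
      (fun x y hxy => hstar ▸ congrArg Prod.snd hxy) (funext fun x => ?_)
    exact sub_eq_zero.1 (congrFun (hloss istar) x)

/-- BVFT identification: if `Q⋆` is among the candidates `(Q i)_{i : ι}`, then a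
candidate `Q i` equals `Q⋆` iff its BVFT loss
`max_j ‖Q i − T_{G_{i,j}} (Q i)‖₂,μ` vanishes, where `G_{i,j}` is induced by the joint
partition `φ_{i,j}(x) = (Q i x, Q j x)`. -/
theorem stmt_3 {S A ι : Type*} [Fintype S] [Fintype A] [Nonempty S] [Nonempty A]
    [Fintype ι] [Nonempty ι]
    (Rmax : ℝ) (R : S × A → ℝ) (hR : ∀ x, 0 ≤ R x ∧ R x ≤ Rmax)
    (P : S × A → S → ℝ) (hP0 : ∀ x s', 0 ≤ P x s') (hP1 : ∀ x, ∑ s' : S, P x s' = 1)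
    (γ : ℝ) (hγ0 : 0 ≤ γ) (hγ1 : γ < 1)
    (μ : S × A → ℝ) (hμpos : ∀ x, 0 < μ x) (hμsum : ∑ x : S × A, μ x = 1)
    (Q : ι → S × A → ℝ)
    (Qstar : S × A → ℝ) (hQstar : TOpt R P γ Qstar = Qstar)
    (hmem : ∃ istar, Q istar = Qstar) :
    ∀ i, Q i = Qstar ↔
      (univ.sup' univ_nonempty fun j : ι =>
        l2mu μ (fun x => Q i x -
          cellAvg μ (fun y : S × A => (Q i y, Q j y)) (TOpt R P γ (Q i)) x)) = 0 :=
  stmt_3_general R P hP0 hP1 γ hγ0 hγ1 μ hμpos Q Qstar hQstar hmem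
end

section
/- In the finite MDP setting, let π : S → A be a deterministic policy, μ a fully supported probability distribution on S×A, and φ : S×A → I any partition function. Then the projected policy Bellman operator T_G^π is a γ-contraction in the sup-norm: for all Q₁, Q₂ : S×A → ℝ, ∥T_G^π Q₁ − T_G^π Q₂∥_∞ ≤ γ ∥Q₁ − Q₂∥_∞. -/
open Finset

/-- The policy Bellman operator `T^π`. -/
noncomputable def TPol {S A : Type*} [Fintype S] [Fintype A]
    (R : S × A → ℝ) (P : S × A → S → ℝ) (γ : ℝ) (π : S → A)
    (Q : S × A → ℝ) (x : S × A) : ℝ :=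
  R x + γ * ∑ s' : S, P x s' * Q (s', π s')

/-- the projected policy Bellman operator `T_G^π` is a γ-contraction in
sup-norm. -/
theorem stmt_4 {S A I : Type*} [Fintype S] [Fintype A] [Nonempty S] [Nonempty A]
    [DecidableEq I]
    (Rmax : ℝ) (R : S × A → ℝ) (hR : ∀ x, 0 ≤ R x ∧ R x ≤ Rmax)
    (P : S × A → S → ℝ) (hP0 : ∀ x s', 0 ≤ P x s') (hP1 : ∀ x, ∑ s' : S, P x s' = 1)
    (γ : ℝ) (hγ0 : 0 ≤ γ) (hγ1 : γ < 1)
    (π : S → A)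
    (μ : S × A → ℝ) (hμpos : ∀ x, 0 < μ x) (hμsum : ∑ x : S × A, μ x = 1)
    (φ : S × A → I) (Q₁ Q₂ : S × A → ℝ) :
    supNorm (fun x => cellAvg μ φ (TPol R P γ π Q₁) x - cellAvg μ φ (TPol R P γ π Q₂) x) ≤
      γ * supNorm (fun x => Q₁ x - Q₂ x) := by

  set D := supNorm (fun x => Q₁ x - Q₂ x) with hDdef
  have hD0 : 0 ≤ D := by
    have := Finset.le_sup' (fun x : S × A => |Q₁ x - Q₂ x|)
      (Finset.mem_univ (Classical.arbitrary (S × A)))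
    exact le_trans (abs_nonneg _) this
  have hT : ∀ x : S × A, |TPol R P γ π Q₁ x - TPol R P γ π Q₂ x| ≤ γ * D := by
    intro x
    have heq : TPol R P γ π Q₁ x - TPol R P γ π Q₂ x
        = γ * ∑ s' : S, P x s' * (Q₁ (s', π s') - Q₂ (s', π s')) := by
      simp only [TPol, mul_sub, Finset.mul_sum]
      rw [Finset.sum_sub_distrib]
      ring
    rw [heq, abs_mul, abs_of_nonneg hγ0]
    refine mul_le_mul_of_nonneg_left ?_ hγ0
    calc |∑ s' : S, P x s' * (Q₁ (s', π s') - Q₂ (s', π s'))|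
        ≤ ∑ s' : S, |P x s' * (Q₁ (s', π s') - Q₂ (s', π s'))| :=
          Finset.abs_sum_le_sum_abs _ _
      _ ≤ ∑ s' : S, P x s' * D := by
          refine Finset.sum_le_sum fun s' _ => ?_
          rw [abs_mul, abs_of_nonneg (hP0 x s')]
          refine mul_le_mul_of_nonneg_left ?_ (hP0 x s')
          exact Finset.le_sup' (fun x : S × A => |Q₁ x - Q₂ x|)
            (Finset.mem_univ (s', π s'))
      _ = D := by rw [← Finset.sum_mul, hP1, one_mul]
  refine Finset.sup'_le _ _ fun x _ => ?_
  have hden : 0 < ∑ y : S × A, if φ y = φ x then μ y else 0 := by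
    refine Finset.sum_pos' (fun y _ => ?_) ⟨x, Finset.mem_univ x, ?_⟩
    · split <;> [exact (hμpos y).le; rfl]
    · simp [(hμpos x).le, hμpos x]
  have hdiff : cellAvg μ φ (TPol R P γ π Q₁) x - cellAvg μ φ (TPol R P γ π Q₂) x
      = (∑ y : S × A, if φ y = φ x then
          μ y * (TPol R P γ π Q₁ y - TPol R P γ π Q₂ y) else 0) /
        (∑ y : S × A, if φ y = φ x then μ y else 0) := by
    unfold cellAvg
    rw [div_sub_div_same, ← Finset.sum_sub_distrib]
    congr 1
    refine Finset.sum_congr rfl fun y _ => ?_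
    split <;> ring
  show |cellAvg μ φ (TPol R P γ π Q₁) x - cellAvg μ φ (TPol R P γ π Q₂) x| ≤ γ * D
  rw [hdiff, abs_div, abs_of_pos hden, div_le_iff₀ hden]
  calc |∑ y : S × A, if φ y = φ x then
          μ y * (TPol R P γ π Q₁ y - TPol R P γ π Q₂ y) else 0|
      ≤ ∑ y : S × A, |if φ y = φ x then
          μ y * (TPol R P γ π Q₁ y - TPol R P γ π Q₂ y) else 0| :=
        Finset.abs_sum_le_sum_abs _ _
    _ ≤ ∑ y : S × A, if φ y = φ x then μ y * (γ * D) else 0 := by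
        refine Finset.sum_le_sum fun y _ => ?_
        split
        · rw [abs_mul, abs_of_nonneg (hμpos y).le]
          exact mul_le_mul_of_nonneg_left (hT y) (hμpos y).le
        · simp
    _ = γ * D * ∑ y : S × A, if φ y = φ x then μ y else 0 := by
        rw [Finset.mul_sum]
        refine Finset.sum_congr rfl fun y _ => ?_
        split <;> ring
end

section
/- (Aggregated MDP interpretation of the projected operator.) In the finite MDP setting, let π : S → A be a deterministic policy, μ a fully supported probability distribution on S×A, and φ : S×A → I a partition function. Define R_φ(s,a) = [∑_{(t,b): φ(t,b)=φ(s,a)} μ(t,b) R(t,b)] / [∑_{(t,b): φ(t,b)=φ(s,a)} μ(t,b)] and P_φ(s'|s,a) = [∑_{(t,b): φ(t,b)=φ(s,a)} μ(t,b) P(s'|t,b)] / [∑_{(t,b): φ(t,b)=φ(s,a)} μ(t,b)]. Then P_φ is a valid transition function (P_φ(s'|s,a) ≥ 0 and ∑_{s'} P_φ(s'|s,a) = 1), and for every Q : S×A → ℝ and every (s,a), (T_G^π Q)(s,a) = R_φ(s,a) + γ ∑_{s'} P_φ(s'|s,a) Q(s', π(s')); i.e., T_G^π is the policy Bellman operator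 of π in the aggregated MDP with reward R_φ and transitions P_φ. -/
open Finset

/-!
For fixed `x`, `h ↦ cellAvg μ φ h x` is a linear functional whose weights are nonnegative and sum
to one, the cell of `x` carrying positive `μ`-mass. Averaging the rows of `P` therefore gives a
stochastic kernel, and linearity carries the backup `R + γ • P Q` through the average.
-/

section CellAverage

variable {S A I : Type*} [Fintype S] [Fintype A] [DecidableEq I]
  (μ : S × A → ℝ) (φ : S × A → I)

theorem cellAvg_add (f g : S × A → ℝ) (x : S × A) :
    cellAvg μ φ (fun y => f y + g y) x = cellAvg μ φ f x + cellAvg μ φ g x := by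
  simp only [cellAvg, ← add_div, ← sum_add_distrib]
  congr 1
  refine sum_congr rfl fun y _ => ?_
  split_ifs <;> ring

theorem cellAvg_const_mul (c : ℝ) (f : S × A → ℝ) (x : S × A) :
    cellAvg μ φ (fun y => c * f y) x = c * cellAvg μ φ f x := by
  simp only [cellAvg, mul_div_assoc', mul_sum]
  congr 1
  refine sum_congr rfl fun y _ => ?_
  split_ifs <;> ring

theorem cellAvg_mul_const (c : ℝ) (f : S × A → ℝ) (x : S × A) :
    cellAvg μ φ (fun y => f y * c) x = cellAvg μ φ f x * c := by
  simpa only [mul_comm _ c] using cellAvg_const_mul μ φ c f x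

theorem cellAvg_sum {ι : Type*} (s : Finset ι) (f : ι → S × A → ℝ) (x : S × A) :
    cellAvg μ φ (fun y => ∑ i ∈ s, f i y) x = ∑ i ∈ s, cellAvg μ φ (f i) x := by
  simp only [cellAvg, ← sum_div]
  congr 1
  rw [sum_comm]
  refine sum_congr rfl fun y _ => ?_
  split_ifs
  · exact mul_sum _ _ _
  · simp

theorem cellAvg_nonneg (hμ : ∀ y, 0 ≤ μ y) {h : S × A → ℝ} (hh : ∀ y, 0 ≤ h y) (x : S × A) :
    0 ≤ cellAvg μ φ h x := by
  refine div_nonneg (sum_nonneg fun y _ => ?_) (sum_nonneg fun y _ => ?_)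
  · split_ifs
    exacts [mul_nonneg (hμ y) (hh y), le_rfl]
  · split_ifs
    exacts [hμ y, le_rfl]

theorem cellAvg_const (hμ : ∀ y, 0 < μ y) (c : ℝ) (x : S × A) :
    cellAvg μ φ (fun _ => c) x = c := by
  have hcell : 0 < ∑ y : S × A, if φ y = φ x then μ y else 0 :=
    sum_pos' (fun y _ => by split_ifs <;> first | rfl | exact (hμ y).le)
      ⟨x, mem_univ x, by simp [hμ x]⟩
  rw [cellAvg, div_eq_iff hcell.ne', mul_sum]
  refine sum_congr rfl fun y _ => ?_
  split_ifs <;> ring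

theorem cellAvg_TPol (R : S × A → ℝ) (P : S × A → S → ℝ) (γ : ℝ) (π : S → A)
    (Q : S × A → ℝ) (x : S × A) :
    cellAvg μ φ (TPol R P γ π Q) x =
      TPol (cellAvg μ φ R) (fun y s' => cellAvg μ φ (fun z => P z s') y) γ π Q x := by
  change cellAvg μ φ (fun y => R y + γ * ∑ s', P y s' * Q (s', π s')) x = _
  simp only [cellAvg_add, cellAvg_const_mul, cellAvg_sum, cellAvg_mul_const, TPol]

end CellAverage

theorem stmt_6_general {S A I : Type*} [Fintype S] [Fintype A]
    [DecidableEq I]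
    (R : S × A → ℝ)
    (P : S × A → S → ℝ) (hP0 : ∀ x s', 0 ≤ P x s') (hP1 : ∀ x, ∑ s' : S, P x s' = 1)
    (γ : ℝ)
    (π : S → A)
    (μ : S × A → ℝ) (hμpos : ∀ x, 0 < μ x)
    (φ : S × A → I) :
    (∀ x s', 0 ≤ cellAvg μ φ (fun y => P y s') x) ∧
    (∀ x, ∑ s' : S, cellAvg μ φ (fun y => P y s') x = 1) ∧
    (∀ Q : S × A → ℝ, ∀ x,
      cellAvg μ φ (TPol R P γ π Q) x =
        cellAvg μ φ R x + γ * ∑ s' : S, cellAvg μ φ (fun y => P y s') x * Q (s', π s')) := by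
  refine ⟨fun x s' => cellAvg_nonneg μ φ (fun y => (hμpos y).le) (fun y => hP0 y s') x,
    fun x => ?_, cellAvg_TPol μ φ R P γ π⟩
  rw [← cellAvg_sum]
  simpa only [hP1] using cellAvg_const μ φ hμpos 1 x

/-- aggregated MDP interpretation: the μ-averaged transitions `P_φ` form a
valid transition function, and the projected operator `T_G^π` is exactly the policy Bellman
operator of the aggregated MDP `(R_φ, P_φ)`. -/
theorem stmt_6 {S A I : Type*} [Fintype S] [Fintype A] [Nonempty S] [Nonempty A]
    [DecidableEq I]
    (Rmax : ℝ) (R : S × A → ℝ) (hR : ∀ x, 0 ≤ R x ∧ R x ≤ Rmax)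
    (P : S × A → S → ℝ) (hP0 : ∀ x s', 0 ≤ P x s') (hP1 : ∀ x, ∑ s' : S, P x s' = 1)
    (γ : ℝ) (hγ0 : 0 ≤ γ) (hγ1 : γ < 1)
    (π : S → A)
    (μ : S × A → ℝ) (hμpos : ∀ x, 0 < μ x) (hμsum : ∑ x : S × A, μ x = 1)
    (φ : S × A → I) :
    (∀ x s', 0 ≤ cellAvg μ φ (fun y => P y s') x) ∧
    (∀ x, ∑ s' : S, cellAvg μ φ (fun y => P y s') x = 1) ∧
    (∀ Q : S × A → ℝ, ∀ x,
      cellAvg μ φ (TPol R P γ π Q) x =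
        cellAvg μ φ R x + γ * ∑ s' : S, cellAvg μ φ (fun y => P y s') x * Q (s', π s')) :=
  stmt_6_general R P hP0 hP1 γ π μ hμpos φ
end

section
/- (Telescoping identity for off-policy evaluation.) In the finite MDP setting, let π : S → A be a deterministic policy, d₀ a probability distribution on S, and define the occupancy sequence d^π_0(s,a) = d₀(s) 𝟙[a = π(s)] and d^π_{t+1}(s',a') = 𝟙[a' = π(s')] ∑_{(s,a)} d^π_t(s,a) P(s'|s,a), and the normalized discounted occupancy d^π(s,a) = (1−γ) ∑_{t=0}^∞ γ^t d^π_t(s,a) (the series converges since γ ∈ [0,1)). Let J(π) = ∑_s d₀(s) Q^π(s, π(s)). Then for every Q : S×A → ℝ: J(π) = ∑_s d₀(s) Q(s, π(s)) − (1/(1−γ)) ∑_{(s,a)} d^π(s,a) (Q(s,a) − (T^π Q)(s,a)). -/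
/-!
Pairing the Bellman residual `Q - T^π Q` with the step-`t` occupancy `d^π_t` gives
`⟨d^π_t, Q⟩ - ⟨d^π_t, R⟩ - γ ⟨d^π_{t+1}, Q⟩`, because `d^π_{t+1}` is the push-forward of
`d^π_t` under the transition kernel followed by `π`. Weighting by `γ^t` and summing over `t`
telescopes to `⟨d₀, Q(·, π ·)⟩ - ∑_t γ^t ⟨d^π_t, R⟩`; the series converge since stochastic
transitions do not increase the `ℓ¹` norm of `d^π_t`. So the right-hand side of the identity is
the discounted reward `∑_t γ^t ⟨d^π_t, R⟩` for every `Q`, and taking `Q = Q^π`, whose residual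
vanishes, shows that this common value is `J(π)`.
-/

open Finset

/-- The `t`-step state-action occupancy of the deterministic policy `π` started from `d₀`:
`d^π_0(s,a) = d₀(s) 𝟙[a = π(s)]`,
`d^π_{t+1}(s',a') = 𝟙[a' = π(s')] ∑_{(s,a)} d^π_t(s,a) P(s'|s,a)`. -/
noncomputable def occ {S A : Type*} [Fintype S] [Fintype A] [DecidableEq A]
    (P : S × A → S → ℝ) (π : S → A) (d₀ : S → ℝ) : ℕ → S × A → ℝ
  | 0 => fun x => d₀ x.1 * (if x.2 = π x.1 then 1 else 0)
  | (t + 1) => fun x =>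
      (if x.2 = π x.1 then 1 else 0) * ∑ y : S × A, occ P π d₀ t y * P y x.1

theorem Summable.tsum_sub_nat_succ {G : Type*} [AddCommGroup G] [TopologicalSpace G]
    [IsTopologicalAddGroup G] [T2Space G] {a : ℕ → G} (ha : Summable a) :
    ∑' t, (a t - a (t + 1)) = a 0 := by
  rw [ha.tsum_sub ((summable_nat_add_iff 1).2 ha), ha.tsum_eq_zero_add, add_sub_cancel_right]

section Occupancy

variable {S A : Type*} [Fintype S] [Fintype A] [DecidableEq A]

theorem sum_prod_ite_eq_mul (g : S → A) (f : S × A → ℝ) :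
    ∑ x : S × A, (if x.2 = g x.1 then (1 : ℝ) else 0) * f x = ∑ s : S, f (s, g s) := by
  rw [Fintype.sum_prod_type]
  simp

variable (P : S × A → S → ℝ) (π : S → A) (d₀ : S → ℝ)

theorem sum_occ_zero_mul (Q : S × A → ℝ) :
    ∑ x : S × A, occ P π d₀ 0 x * Q x = ∑ s : S, d₀ s * Q (s, π s) := by
  rw [← sum_prod_ite_eq_mul π fun x => d₀ x.1 * Q x]
  refine sum_congr rfl fun x _ => ?_
  simp only [occ]
  ring

theorem sum_occ_succ_mul (Q : S × A → ℝ) (t : ℕ) :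
    ∑ x : S × A, occ P π d₀ (t + 1) x * Q x
      = ∑ y : S × A, occ P π d₀ t y * ∑ s' : S, P y s' * Q (s', π s') := by
  calc ∑ x : S × A, occ P π d₀ (t + 1) x * Q x
      = ∑ s' : S, (∑ y : S × A, occ P π d₀ t y * P y s') * Q (s', π s') := by
        rw [← sum_prod_ite_eq_mul π fun x => (∑ y : S × A, occ P π d₀ t y * P y x.1) * Q x]
        refine sum_congr rfl fun x _ => ?_
        simp only [occ]
        ring
    _ = _ := by
        simp_rw [sum_mul, mul_sum, mul_assoc]
        exact sum_comm

theorem sum_abs_occ_le (hP0 : ∀ x s', 0 ≤ P x s') (hP1 : ∀ x, ∑ s' : S, P x s' = 1)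
    (t : ℕ) :
    ∑ x : S × A, |occ P π d₀ t x| ≤ ∑ s : S, |d₀ s| := by
  induction t with
  | zero =>
    rw [← sum_prod_ite_eq_mul π fun x => |d₀ x.1|]
    refine (sum_congr rfl fun x _ => ?_).le
    simp only [occ]
    split_ifs <;> simp
  | succ t ih =>
    calc ∑ x : S × A, |occ P π d₀ (t + 1) x|
        = ∑ s' : S, |∑ y : S × A, occ P π d₀ t y * P y s'| := by
          simp only [occ, abs_mul, apply_ite, abs_one, abs_zero]
          exact sum_prod_ite_eq_mul π fun x => |∑ y : S × A, occ P π d₀ t y * P y x.1|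
      _ ≤ ∑ s' : S, ∑ y : S × A, |occ P π d₀ t y| * P y s' := by
          refine sum_le_sum fun s' _ => (abs_sum_le_sum_abs _ _).trans_eq ?_
          simp only [abs_mul, abs_of_nonneg (hP0 _ s')]
      _ = ∑ y : S × A, |occ P π d₀ t y| := by
          rw [sum_comm]
          simp only [← mul_sum, hP1, mul_one]
      _ ≤ _ := ih

variable {P} {γ : ℝ}

theorem summable_pow_mul_occ (hP0 : ∀ x s', 0 ≤ P x s') (hP1 : ∀ x, ∑ s' : S, P x s' = 1)
    (hγ0 : 0 ≤ γ) (hγ1 : γ < 1) (x : S × A) :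
    Summable fun t => γ ^ t * occ P π d₀ t x := by
  refine ((summable_geometric_of_lt_one hγ0 hγ1).mul_right (∑ s : S, |d₀ s|)).of_norm_bounded
    fun t => ?_
  rw [Real.norm_eq_abs, abs_mul, abs_of_nonneg (pow_nonneg hγ0 t)]
  gcongr
  exact (single_le_sum (fun y _ => abs_nonneg (occ P π d₀ t y)) (mem_univ x)).trans
    (sum_abs_occ_le P π d₀ hP0 hP1 t)

theorem sum_tsum_pow_mul_occ_mul (hP0 : ∀ x s', 0 ≤ P x s')
    (hP1 : ∀ x, ∑ s' : S, P x s' = 1) (hγ0 : 0 ≤ γ) (hγ1 : γ < 1) (f : S × A → ℝ) :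
    ∑ x : S × A, (∑' t, γ ^ t * occ P π d₀ t x) * f x
      = ∑' t, γ ^ t * ∑ x : S × A, occ P π d₀ t x * f x := by
  simp_rw [← tsum_mul_right, mul_sum, ← mul_assoc]
  exact (Summable.tsum_finsetSum fun x _ =>
    (summable_pow_mul_occ π d₀ hP0 hP1 hγ0 hγ1 x).mul_right (f x)).symm

theorem summable_pow_mul_sum_occ_mul (hP0 : ∀ x s', 0 ≤ P x s')
    (hP1 : ∀ x, ∑ s' : S, P x s' = 1) (hγ0 : 0 ≤ γ) (hγ1 : γ < 1) (f : S × A → ℝ) :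
    Summable fun t => γ ^ t * ∑ x : S × A, occ P π d₀ t x * f x := by
  simp_rw [mul_sum, ← mul_assoc]
  exact summable_sum fun x _ => (summable_pow_mul_occ π d₀ hP0 hP1 hγ0 hγ1 x).mul_right (f x)

variable (R : S × A → ℝ)

theorem sum_occ_mul_sub_TPol (Q : S × A → ℝ) (t : ℕ) :
    ∑ x : S × A, occ P π d₀ t x * (Q x - TPol R P γ π Q x)
      = ∑ x : S × A, occ P π d₀ t x * Q x - ∑ x : S × A, occ P π d₀ t x * R x
        - γ * ∑ x : S × A, occ P π d₀ (t + 1) x * Q x := by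
  rw [sum_occ_succ_mul, mul_sum, ← sum_sub_distrib, ← sum_sub_distrib]
  refine sum_congr rfl fun x _ => ?_
  simp only [TPol]
  ring

theorem tsum_pow_mul_sum_occ_mul_sub_TPol (hP0 : ∀ x s', 0 ≤ P x s')
    (hP1 : ∀ x, ∑ s' : S, P x s' = 1) (hγ0 : 0 ≤ γ) (hγ1 : γ < 1) (Q : S × A → ℝ) :
    ∑' t, γ ^ t * ∑ x : S × A, occ P π d₀ t x * (Q x - TPol R P γ π Q x)
      = ∑ s : S, d₀ s * Q (s, π s) - ∑' t, γ ^ t * ∑ x : S × A, occ P π d₀ t x * R x := by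
  set a : ℕ → ℝ := fun t => γ ^ t * ∑ x : S × A, occ P π d₀ t x * Q x
  set r : ℕ → ℝ := fun t => γ ^ t * ∑ x : S × A, occ P π d₀ t x * R x
  have ha : Summable a := summable_pow_mul_sum_occ_mul π d₀ hP0 hP1 hγ0 hγ1 Q
  have hr : Summable r := summable_pow_mul_sum_occ_mul π d₀ hP0 hP1 hγ0 hγ1 R
  have hstep : ∀ t, γ ^ t * ∑ x : S × A, occ P π d₀ t x * (Q x - TPol R P γ π Q x)
      = a t - a (t + 1) - r t := fun t => by
    simp only [a, r, sum_occ_mul_sub_TPol, pow_succ]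
    ring
  rw [tsum_congr hstep, (ha.sub ((summable_nat_add_iff 1).2 ha)).tsum_sub hr,
    ha.tsum_sub_nat_succ]
  simp only [a, pow_zero, one_mul, sum_occ_zero_mul]

end Occupancy

theorem stmt_13_general {S A : Type*} [Fintype S] [Fintype A]
    [DecidableEq A]
    (R : S × A → ℝ)
    (P : S × A → S → ℝ) (hP0 : ∀ x s', 0 ≤ P x s') (hP1 : ∀ x, ∑ s' : S, P x s' = 1)
    (γ : ℝ) (hγ0 : 0 ≤ γ) (hγ1 : γ < 1)
    (π : S → A)
    (Qpi : S × A → ℝ) (hQpi : TPol R P γ π Qpi = Qpi)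
    (d₀ : S → ℝ) :
    ∀ Q : S × A → ℝ,
      (∑ s : S, d₀ s * Qpi (s, π s)) =
        (∑ s : S, d₀ s * Q (s, π s)) -
          (1 / (1 - γ)) * ∑ x : S × A,
            ((1 - γ) * ∑' t : ℕ, γ ^ t * occ P π d₀ t x) * (Q x - TPol R P γ π Q x) := by
  intro Q
  have hJ := tsum_pow_mul_sum_occ_mul_sub_TPol π d₀ R hP0 hP1 hγ0 hγ1 Qpi
  simp only [hQpi, sub_self, mul_zero, sum_const_zero, tsum_zero] at hJ
  have hγ : (1 - γ) ≠ 0 := by linarith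
  simp_rw [mul_assoc, ← mul_sum, ← mul_assoc, one_div_mul_cancel hγ, one_mul,
    sum_tsum_pow_mul_occ_mul π d₀ hP0 hP1 hγ0 hγ1,
    tsum_pow_mul_sum_occ_mul_sub_TPol π d₀ R hP0 hP1 hγ0 hγ1]
  linarith

/-- telescoping identity for off-policy evaluation: with
`d^π = (1−γ) ∑_t γ^t d^π_t` and `J(π) = ∑_s d₀(s) Q^π(s, π(s))`, for every `Q`,
`J(π) = ∑_s d₀(s) Q(s,π(s)) − (1/(1−γ)) ∑_{(s,a)} d^π(s,a)(Q(s,a) − (T^π Q)(s,a))`. -/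
theorem stmt_13 {S A : Type*} [Fintype S] [Fintype A] [Nonempty S] [Nonempty A]
    [DecidableEq A]
    (Rmax : ℝ) (R : S × A → ℝ) (hR : ∀ x, 0 ≤ R x ∧ R x ≤ Rmax)
    (P : S × A → S → ℝ) (hP0 : ∀ x s', 0 ≤ P x s') (hP1 : ∀ x, ∑ s' : S, P x s' = 1)
    (γ : ℝ) (hγ0 : 0 ≤ γ) (hγ1 : γ < 1)
    (π : S → A)
    (Qpi : S × A → ℝ) (hQpi : TPol R P γ π Qpi = Qpi)
    (d₀ : S → ℝ) (hd₀0 : ∀ s, 0 ≤ d₀ s) (hd₀1 : ∑ s : S, d₀ s = 1) :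
    ∀ Q : S × A → ℝ,
      (∑ s : S, d₀ s * Qpi (s, π s)) =
        (∑ s : S, d₀ s * Q (s, π s)) -
          (1 / (1 - γ)) * ∑ x : S × A,
            ((1 - γ) * ∑' t : ℕ, γ ^ t * occ P π d₀ t x) * (Q x - TPol R P γ π Q x) :=
  stmt_13_general R P hP0 hP1 γ hγ0 hγ1 π Qpi hQpi d₀
end
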